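/- Let K = ℚ(n,c) be the field of rational functions in two independent variables n and c over ℚ. Then the polynomial P̃_{n,c,4}(X) = X⁴ − 2X³ + (1−n)X² + nX − c is irreducible over K and the Galois group of its splitting field over K is isomorphic to the dihedral group D₄ of order 8. -/

import Mathlib

/-!
With `y = x² - x` the quartic reads `y² - n y - c`, so its roots are `(1 ± γ)/2` and
`(1 ± δ)/2` where `α² = a := n² + 4c`, `γ² = 1 + 2n + 2α`, `δ² = 1 + 2n - 2α` and
`(γδ)² = b := 1 + 4n - 16c`. If `a`, `b` and `ab` are not squares, the splitting field is the
tower of quadratic extensions `F ⊂ F(α) ⊂ F(α, γδ) ⊂ F(α, γδ, γ)`: a square root of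
`1 + 2n + 2α` in `F(α, γδ)` would make `1 + 2n + 2α` or `b(1 + 2n + 2α)` a square in `F(α)`,
and their norms to `F` are `b` and `b³`. The same norm argument shows `γ ∉ F(α)`, so a root
`(1 + γ)/2` has degree `4` and the quartic is irreducible. A group of order 8 acting faithfully
on four roots is a Sylow 2-subgroup of `S₄`, hence `D₄`. Over `ℚ(n,c)`, specialising `(n, c)`
to `(0, X)` or `(X, 0)` turns `a`, `b` and `ab` into polynomials of odd degree, so none of them
is a square.
-/

/-- The field `K = ℚ(n,c)` of rational functions in two independent variables
over `ℚ`: the fraction field of the polynomial ring `ℚ[n,c]`. -/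
abbrev K : Type := FractionRing (MvPolynomial (Fin 2) ℚ)

/-- The variable `n` viewed in `K = ℚ(n,c)`. -/
noncomputable def n : K := algebraMap (MvPolynomial (Fin 2) ℚ) K (MvPolynomial.X 0)

/-- The variable `c` viewed in `K = ℚ(n,c)`. -/
noncomputable def c : K := algebraMap (MvPolynomial (Fin 2) ℚ) K (MvPolynomial.X 1)

open Polynomial in
/-- The quartic `P̃_{n,c,4} = X⁴ - 2X³ + (1-n)X² + nX - c` as a polynomial over
`K = ℚ(n,c)`. -/
noncomputable def P₄ : Polynomial K :=
  X ^ 4 - 2 * X ^ 3 + C (1 - n) * X ^ 2 + C n * X - C c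

open Polynomial IntermediateField Module

section QuadraticExtension

variable {F E : Type*} [Field F] [Field E] [Algebra F E] {d : F} {β : E}

theorem isIntegral_of_sq_eq_algebraMap (hβ : β ^ 2 = algebraMap F E d) : IsIntegral F β :=
  ⟨X ^ 2 - C d, monic_X_pow_sub_C d two_ne_zero, by simp [hβ]⟩

theorem minpoly_eq_X_sq_sub_C (hβ : β ^ 2 = algebraMap F E d) (hd : ¬IsSquare d) :
    minpoly F β = X ^ 2 - C d := by
  have hirr : Irreducible (X ^ 2 - C d) :=
    X_pow_sub_C_irreducible_of_prime Nat.prime_two fun x hx => hd ⟨x, by rw [← hx, sq]⟩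
  refine (minpoly.eq_of_irreducible_of_monic hirr ?_ (monic_X_pow_sub_C d two_ne_zero)).symm
  simp [hβ]

theorem finrank_adjoin_eq_two_of_sq_eq (hβ : β ^ 2 = algebraMap F E d) (hd : ¬IsSquare d) :
    finrank F F⟮β⟯ = 2 := by
  rw [adjoin.finrank (isIntegral_of_sq_eq_algebraMap hβ), minpoly_eq_X_sq_sub_C hβ hd,
    natDegree_X_pow_sub_C]

theorem exists_eq_add_mul_of_mem_adjoin (hβ : β ^ 2 = algebraMap F E d) {z : E}
    (hz : z ∈ F⟮β⟯) : ∃ p q : F, algebraMap F E p + algebraMap F E q * β = z := by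
  have hint := isIntegral_of_sq_eq_algebraMap hβ
  rw [← mem_toSubalgebra, adjoin_simple_toSubalgebra_of_isAlgebraic hint.isAlgebraic,
    Algebra.adjoin_singleton_eq_range_aeval] at hz
  obtain ⟨f, rfl⟩ := hz
  have hm : (X ^ 2 - C d).Monic := monic_X_pow_sub_C d two_ne_zero
  have hr : aeval β (f %ₘ (X ^ 2 - C d)) = aeval β f :=
    aeval_modByMonic_eq_self_of_root (by simp [hβ])
  have hdeg : (f %ₘ (X ^ 2 - C d)).natDegree ≤ 1 := by
    have := natDegree_modByMonic_lt f hm fun h => by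
      simpa [natDegree_X_pow_sub_C] using congrArg natDegree h
    rw [natDegree_X_pow_sub_C] at this; omega
  generalize f %ₘ (X ^ 2 - C d) = r at hr hdeg
  refine ⟨r.coeff 0, r.coeff 1, ?_⟩
  change _ = aeval β f
  conv_rhs => rw [← hr, eq_X_add_C_of_natDegree_le_one hdeg]
  rw [map_add, map_mul, aeval_C, aeval_C, aeval_X, add_comm]

theorem eq_and_eq_of_add_mul_eq (hβ : β ^ 2 = algebraMap F E d) (hd : ¬IsSquare d)
    {p q p' q' : F}
    (h : algebraMap F E p + algebraMap F E q * β = algebraMap F E p' + algebraMap F E q' * β) :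
    p = p' ∧ q = q' := by
  have hq : q = q' := by
    by_contra hq
    have hne : algebraMap F E (q - q') ≠ 0 := by simpa [sub_eq_zero] using hq
    have : β = algebraMap F E ((p' - p) / (q - q')) := by
      rw [map_div₀, eq_div_iff hne]; simp only [map_sub]; linear_combination h
    exact hd ⟨(p' - p) / (q - q'),
      (algebraMap F E).injective (by rw [map_mul, ← this, ← sq, hβ])⟩
  subst hq
  simpa using h

theorem exists_sq_eq_add_mul_of_mem_adjoin (hβ : β ^ 2 = algebraMap F E d) {w : E}
    (hw : w ∈ F⟮β⟯) :
    ∃ p q : F, w ^ 2 = algebraMap F E (p ^ 2 + q ^ 2 * d) + algebraMap F E (2 * p * q) * β ∧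
      IsSquare ((p ^ 2 + q ^ 2 * d) ^ 2 - (2 * p * q) ^ 2 * d) := by
  obtain ⟨p, q, rfl⟩ := exists_eq_add_mul_of_mem_adjoin hβ hw
  refine ⟨p, q, ?_, p ^ 2 - q ^ 2 * d, by ring⟩
  simp only [map_add, map_mul, map_pow, map_ofNat]
  linear_combination (algebraMap F E q) ^ 2 * hβ

theorem isSquare_or_isSquare_mul_of_sq_eq (hβ : β ^ 2 = algebraMap F E d) (hd : ¬IsSquare d)
    (h2 : (2 : F) ≠ 0) {w : E} (hw : w ∈ F⟮β⟯) {z : F} (h : w ^ 2 = algebraMap F E z) :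
    IsSquare z ∨ IsSquare (z * d) := by
  obtain ⟨p, q, hpq, -⟩ := exists_sq_eq_add_mul_of_mem_adjoin hβ hw
  obtain ⟨hz, hpq0⟩ :=
    eq_and_eq_of_add_mul_eq hβ hd (p' := z) (q' := 0) (by rw [← hpq, h]; simp)
  rcases mul_eq_zero.mp hpq0 with hp | rfl
  · right
    obtain rfl : p = 0 := (mul_eq_zero.mp hp).resolve_left h2
    exact ⟨q * d, by rw [← hz]; ring⟩
  · left
    exact ⟨p, by rw [← hz]; ring⟩

theorem isSquare_sq_sub_of_sq_eq (hβ : β ^ 2 = algebraMap F E d) (hd : ¬IsSquare d) {w : E}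
    (hw : w ∈ F⟮β⟯) {s r : F} (h : w ^ 2 = algebraMap F E s + algebraMap F E r * β) :
    IsSquare (s ^ 2 - r ^ 2 * d) := by
  obtain ⟨p, q, hpq, hsq⟩ := exists_sq_eq_add_mul_of_mem_adjoin hβ hw
  obtain ⟨rfl, rfl⟩ := eq_and_eq_of_add_mul_eq hβ hd (hpq.symm.trans h)
  exact hsq

end QuadraticExtension

theorem two_ne_zero_of_algebra {F L : Type*} [Field F] [Semiring L] [Nontrivial L] [Algebra F L]
    (h : (2 : F) ≠ 0) : (2 : L) ≠ 0 := by
  rw [← map_ofNat (algebraMap F L) 2]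
  exact (_root_.map_ne_zero _).mpr h

theorem isSquare_of_isSquare_sq_mul {F : Type*} [Field F] {b x : F} (hb : b ≠ 0)
    (h : IsSquare (b ^ 2 * x)) : IsSquare x := by
  obtain ⟨t, ht⟩ := h
  exact ⟨t / b, by field_simp; linear_combination ht⟩

theorem IntermediateField.exists_mem_sq_eq_of_isSquare {F L : Type*} [Field F] [Field L]
    [Algebra F L] {S : IntermediateField F L} {x : S} (h : IsSquare x) :
    ∃ w ∈ S, w ^ 2 = (x : L) := by
  obtain ⟨w, rfl⟩ := h
  exact ⟨w, w.2, by simp [sq]⟩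

section Tower

variable {F L : Type*} [Field F] [Field L] [Algebra F L] {a b s r : F} {α β γ : L}

theorem not_isSquare_algebraMap_adjoin (h2 : (2 : F) ≠ 0) (ha : ¬IsSquare a)
    (hb : ¬IsSquare b) (hab : ¬IsSquare (a * b)) (hα : α ^ 2 = algebraMap F L a) :
    ¬IsSquare (algebraMap F F⟮α⟯ b) := by
  intro hsq
  obtain ⟨w, hw, hw2⟩ := exists_mem_sq_eq_of_isSquare hsq
  rcases isSquare_or_isSquare_mul_of_sq_eq hα ha h2 hw hw2 with h | h
  · exact hb h
  · exact hab (mul_comm b a ▸ h)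

/-- Over `F⟮α⟯`, `isSquare_or_isSquare_mul_of_sq_eq` leaves `u` or `u * b` as a square; their
norms to `F` are `b` and `b³`. -/
theorem not_isSquare_algebraMap_adjoin_adjoin (h2 : (2 : F) ≠ 0) (ha : ¬IsSquare a)
    (hb : ¬IsSquare b) (hab : ¬IsSquare (a * b)) (hs : s ^ 2 - r ^ 2 * a = b)
    (hα : α ^ 2 = algebraMap F L a) (hβ : β ^ 2 = algebraMap F L b) {u : F⟮α⟯}
    (hu : (u : L) = algebraMap F L s + algebraMap F L r * α) :
    ¬IsSquare (algebraMap F⟮α⟯ F⟮α⟯⟮β⟯ u) := by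
  intro hsq
  obtain ⟨w, hw, hw2⟩ := exists_mem_sq_eq_of_isSquare hsq
  rcases isSquare_or_isSquare_mul_of_sq_eq (F := F⟮α⟯) (d := algebraMap F F⟮α⟯ b) hβ
    (not_isSquare_algebraMap_adjoin h2 ha hb hab hα) (two_ne_zero_of_algebra h2) hw hw2 with h | h
  · obtain ⟨w', hw', hw'2⟩ := exists_mem_sq_eq_of_isSquare h
    exact hb (hs ▸ isSquare_sq_sub_of_sq_eq hα ha hw' (hw'2.trans hu))
  · obtain ⟨w', hw', hw'2⟩ := exists_mem_sq_eq_of_isSquare h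
    have hb0 : b ≠ 0 := by rintro rfl; exact hb ⟨0, by ring⟩
    have hw'2' : w' ^ 2 = algebraMap F L (b * s) + algebraMap F L (b * r) * α := by
      rw [hw'2, MulMemClass.coe_mul, hu, coe_algebraMap_apply]; simp only [map_mul]; ring
    refine hb (isSquare_of_isSquare_sq_mul hb0 ?_)
    convert isSquare_sq_sub_of_sq_eq hα ha hw' hw'2' using 1
    linear_combination -b ^ 2 * hs

theorem finrank_eq_eight_of_adjoin_eq_top (h2 : (2 : F) ≠ 0) (ha : ¬IsSquare a)
    (hb : ¬IsSquare b) (hab : ¬IsSquare (a * b)) (hs : s ^ 2 - r ^ 2 * a = b)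
    (hα : α ^ 2 = algebraMap F L a) (hβ : β ^ 2 = algebraMap F L b)
    (hγ : γ ^ 2 = algebraMap F L s + algebraMap F L r * α) (htop : F⟮α, β, γ⟯ = ⊤) :
    finrank F L = 8 := by
  let F₁ := F⟮α⟯
  let F₂ := F₁⟮β⟯
  have hb₁ := not_isSquare_algebraMap_adjoin h2 ha hb hab hα
  let u : F₁ := ⟨γ ^ 2, hγ ▸ add_mem (F₁.algebraMap_mem s)
    (mul_mem (F₁.algebraMap_mem r) (mem_adjoin_simple_self F α))⟩
  have hu := not_isSquare_algebraMap_adjoin_adjoin h2 ha hb hab hs hα hβ (u := u) hγ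
  have hF₃ : F₂⟮γ⟯ = ⊤ := by
    refine restrictScalars_injective F₁ (restrictScalars_injective F ?_)
    rw [restrictScalars_top, restrictScalars_top, eq_top_iff, ← htop, adjoin_le_iff]
    have hα₂ : α ∈ F₂ := F₂.algebraMap_mem ⟨α, mem_adjoin_simple_self F α⟩
    have hβ₂ : β ∈ F₂ := mem_adjoin_simple_self F₁ β
    rintro z (rfl | rfl | rfl)
    · exact F₂⟮γ⟯.algebraMap_mem ⟨z, hα₂⟩
    · exact F₂⟮γ⟯.algebraMap_mem ⟨z, hβ₂⟩
    · exact mem_adjoin_simple_self F₂ z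
  have hL : finrank F₂ L = 2 := by
    rw [← finrank_top', ← hF₃]
    exact finrank_adjoin_eq_two_of_sq_eq (d := algebraMap F₁ F₂ u) rfl hu
  rw [← Module.finrank_mul_finrank F F₁ L, ← Module.finrank_mul_finrank F₁ F₂ L, hL,
    finrank_adjoin_eq_two_of_sq_eq hα ha, finrank_adjoin_eq_two_of_sq_eq (F := F₁) hβ hb₁]

end Tower

section Quartic

variable {F : Type*} [Field F] {n c : F}

variable (n c) in
noncomputable def quartic : F[X] := X ^ 4 - 2 * X ^ 3 + C (1 - n) * X ^ 2 + C n * X - C c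

theorem natDegree_quartic : (quartic n c).natDegree = 4 := by
  unfold quartic; compute_degree!

theorem degree_quartic : (quartic n c).degree = 4 := by
  unfold quartic; compute_degree!

theorem monic_quartic : (quartic n c).Monic := by
  unfold quartic; monicity!

theorem aeval_quartic {E : Type*} [CommRing E] [Algebra F E] (z : E) :
    aeval z (quartic n c) =
      (z ^ 2 - z) ^ 2 - algebraMap F E n * (z ^ 2 - z) - algebraMap F E c := by
  simp only [quartic, map_sub, map_add, map_mul, map_pow, map_ofNat, aeval_X, aeval_C, map_one]
  ring

theorem map_quartic_eq_mul {E : Type*} [CommRing E] [Algebra F E] {y₁ y₂ : E}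
    (hsum : y₁ + y₂ = algebraMap F E n) (hprod : y₁ * y₂ = -algebraMap F E c) :
    (quartic n c).map (algebraMap F E) = (X ^ 2 - X - C y₁) * (X ^ 2 - X - C y₂) := by
  have h1 : (C y₁ : E[X]) + C y₂ = C (algebraMap F E n) := by rw [← C_add, hsum]
  have h2 : (C y₁ : E[X]) * C y₂ = -C (algebraMap F E c) := by rw [← C_mul, hprod, C_neg]
  simp only [quartic, Polynomial.map_sub, Polynomial.map_add, Polynomial.map_mul,
    Polynomial.map_pow, Polynomial.map_X, Polynomial.map_C, Polynomial.map_ofNat,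
    Polynomial.map_one, map_sub, map_one]
  linear_combination (X ^ 2 - X : E[X]) * h1 - h2

theorem sq_two_mul_sub_one_eq {E : Type*} [CommRing E] [Algebra F E] (x : E) :
    (2 * x - 1) ^ 2 =
      algebraMap F E (1 + 2 * n) + algebraMap F E 2 * (2 * (x ^ 2 - x) - algebraMap F E n) := by
  simp only [map_add, map_mul, map_one, map_ofNat]; ring

theorem sq_eq_of_aeval_quartic_eq_zero {E : Type*} [CommRing E] [Algebra F E] {x : E}
    (hx : aeval x (quartic n c) = 0) :
    (2 * (x ^ 2 - x) - algebraMap F E n) ^ 2 = algebraMap F E (n ^ 2 + 4 * c) := by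
  rw [aeval_quartic] at hx
  simp only [map_add, map_mul, map_pow, map_ofNat]
  linear_combination 4 * hx

theorem minpoly_eq_quartic (ha : ¬IsSquare (n ^ 2 + 4 * c)) (hb : ¬IsSquare (1 + 4 * n - 16 * c))
    {E : Type*} [Field E] [Algebra F E] {x : E} (hx : aeval x (quartic n c) = 0) :
    minpoly F x = quartic n c := by
  set α := 2 * (x ^ 2 - x) - algebraMap F E n
  have hα := sq_eq_of_aeval_quartic_eq_zero hx
  have hint : IsIntegral F x := ⟨quartic n c, monic_quartic, hx⟩
  have hle : F⟮α⟯ ≤ F⟮x⟯ := by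
    have hx' := mem_adjoin_simple_self F x
    rw [adjoin_simple_le_iff]
    exact sub_mem (mul_mem (ofNat_mem _ 2) (sub_mem (pow_mem hx' 2) hx'))
      (F⟮x⟯.algebraMap_mem n)
  have := adjoin.finiteDimensional hint
  have hdvd : minpoly F x ∣ quartic n c := minpoly.dvd F x hx
  have hdeg : finrank F F⟮x⟯ = (minpoly F x).natDegree := adjoin.finrank hint
  have h2dvd : 2 ∣ finrank F F⟮x⟯ :=
    finrank_adjoin_eq_two_of_sq_eq hα ha ▸ finrank_dvd_of_le_right hle
  have hne2 : finrank F F⟮x⟯ ≠ 2 := by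
    intro h2
    have heq : F⟮α⟯ = F⟮x⟯ :=
      eq_of_le_of_finrank_eq hle (by rw [h2, finrank_adjoin_eq_two_of_sq_eq hα ha])
    have hγ : 2 * x - 1 ∈ F⟮α⟯ :=
      heq ▸ sub_mem (mul_mem (ofNat_mem _ 2) (mem_adjoin_simple_self F x)) (one_mem _)
    refine hb ?_
    convert isSquare_sq_sub_of_sq_eq hα ha hγ (sq_two_mul_sub_one_eq (n := n) x) using 1
    ring
  have hle4 : (minpoly F x).natDegree ≤ 4 :=
    natDegree_quartic (n := n) (c := c) ▸ natDegree_le_of_dvd hdvd monic_quartic.ne_zero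
  have hpos := minpoly.natDegree_pos hint
  refine (eq_of_monic_of_dvd_of_natDegree_le (minpoly.monic hint) monic_quartic hdvd ?_).symm
  rw [natDegree_quartic]
  omega

theorem irreducible_quartic (ha : ¬IsSquare (n ^ 2 + 4 * c))
    (hb : ¬IsSquare (1 + 4 * n - 16 * c)) : Irreducible (quartic n c) := by
  obtain ⟨x, hx⟩ := (SplittingField.splits (quartic n c)).exists_eval_eq_zero
    (by rw [degree_map, degree_quartic]; decide)
  rw [eval_map_algebraMap] at hx
  exact minpoly_eq_quartic ha hb hx ▸ minpoly.irreducible ⟨_, monic_quartic, hx⟩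

theorem exists_roots_of_splits {E : Type*} [Field E] [Algebra F E]
    (hs : ((quartic n c).map (algebraMap F E)).Splits) :
    ∃ x₁ x₃ : E, aeval x₁ (quartic n c) = 0 ∧
      (x₁ ^ 2 - x₁) + (x₃ ^ 2 - x₃) = algebraMap F E n := by
  have hdeg2 (y : E) : (X ^ 2 - X - C y).degree = 2 := by compute_degree!
  obtain ⟨x₁, hx₁⟩ := hs.exists_eval_eq_zero (by rw [degree_map, degree_quartic]; decide)
  rw [eval_map_algebraMap] at hx₁
  have hfac := map_quartic_eq_mul (n := n) (c := c) (y₁ := x₁ ^ 2 - x₁)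
    (y₂ := algebraMap F E n - (x₁ ^ 2 - x₁)) (by ring)
    (by rw [aeval_quartic] at hx₁; linear_combination -hx₁)
  have hs₂ : (X ^ 2 - X - C (algebraMap F E n - (x₁ ^ 2 - x₁))).Splits :=
    hs.of_dvd (Polynomial.map_ne_zero monic_quartic.ne_zero) (hfac ▸ dvd_mul_left _ _)
  obtain ⟨x₃, hx₃⟩ := hs₂.exists_eval_eq_zero (by rw [hdeg2]; decide)
  refine ⟨x₁, x₃, hx₁, ?_⟩
  simp only [eval_sub, eval_pow, eval_X, eval_C] at hx₃
  linear_combination hx₃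

theorem mem_adjoin_of_aeval_quartic_eq_zero {L : Type*} [Field L] [Algebra F L] (h2 : (2 : F) ≠ 0)
    {α β γ : L} (hα : α ^ 2 = algebraMap F L (n ^ 2 + 4 * c))
    (hβ : β ^ 2 = algebraMap F L (1 + 4 * n - 16 * c))
    (hγ : γ ^ 2 = algebraMap F L (1 + 2 * n) + algebraMap F L 2 * α) (hγ0 : γ ≠ 0) {z : L}
    (hz : aeval z (quartic n c) = 0) : z ∈ F⟮α, β, γ⟯ := by
  set N := algebraMap F L n
  set t := 2 * z - 1
  simp only [map_add, map_sub, map_mul, map_pow, map_one, map_ofNat] at hα hβ hγ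
  rw [aeval_quartic] at hz
  have h1 : (t ^ 2 - (1 + 2 * N)) ^ 2 = 4 * α ^ 2 := by linear_combination 16 * hz - 4 * hα
  have hfac : (t ^ 2 - γ ^ 2) * (t ^ 2 - (1 + 2 * N) + 2 * α) = 0 := by
    linear_combination h1 - (t ^ 2 - (1 + 2 * N) + 2 * α) * hγ
  -- `t²` is `γ²` or `1 + 2n - 2α`, and `(1 + 2n - 2α) γ² = b = β²`.
  have key : (t - γ) * (t + γ) * ((t * γ - β) * (t * γ + β)) = 0 := by
    linear_combination
      γ ^ 2 * hfac + (t ^ 2 - γ ^ 2) * ((1 + 2 * N - 2 * α) * hγ - 4 * hα - hβ)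
  have hβE : β ∈ F⟮α, β, γ⟯ := subset_adjoin F _ (by simp)
  have hγE : γ ∈ F⟮α, β, γ⟯ := subset_adjoin F _ (by simp)
  have ht : t ∈ F⟮α, β, γ⟯ := by
    rcases mul_eq_zero.mp key with h | h <;> rcases mul_eq_zero.mp h with h | h
    · rw [sub_eq_zero.mp h]; exact hγE
    · rw [eq_neg_of_add_eq_zero_left h]; exact neg_mem hγE
    · rw [eq_div_of_mul_eq hγ0 (sub_eq_zero.mp h)]; exact div_mem hβE hγE
    · rw [eq_div_of_mul_eq hγ0 (eq_neg_of_add_eq_zero_left h)]; exact div_mem (neg_mem hβE) hγE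
  rw [show z = (t + 1) / 2 by rw [eq_div_iff (two_ne_zero_of_algebra h2)]; simp only [t]; ring]
  exact div_mem (add_mem ht (one_mem _)) (ofNat_mem _ 2)

theorem finrank_splittingField_quartic (ha : ¬IsSquare (n ^ 2 + 4 * c))
    (hb : ¬IsSquare (1 + 4 * n - 16 * c))
    (hab : ¬IsSquare ((n ^ 2 + 4 * c) * (1 + 4 * n - 16 * c))) :
    finrank F (quartic n c).SplittingField = 8 := by
  set L := (quartic n c).SplittingField
  -- In characteristic 2, `n² + 4c = n²`.
  have h2 : (2 : F) ≠ 0 := fun h => ha ⟨n, by linear_combination (2 * c) * h⟩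
  obtain ⟨x₁, x₃, hx₁, hsum⟩ :=
    exists_roots_of_splits (SplittingField.splits (quartic n c))
  set α := 2 * (x₁ ^ 2 - x₁) - algebraMap F L n
  set β := (2 * x₁ - 1) * (2 * x₃ - 1)
  set γ := 2 * x₁ - 1
  have hα : α ^ 2 = algebraMap F L (n ^ 2 + 4 * c) := sq_eq_of_aeval_quartic_eq_zero hx₁
  have hγ : γ ^ 2 = algebraMap F L (1 + 2 * n) + algebraMap F L 2 * α :=
    sq_two_mul_sub_one_eq x₁
  have hβ : β ^ 2 = algebraMap F L (1 + 4 * n - 16 * c) := by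
    rw [aeval_quartic] at hx₁
    simp only [map_add, map_sub, map_mul, map_one, map_ofNat]
    linear_combination (4 + 16 * (x₁ ^ 2 - x₁)) * hsum - 16 * hx₁
  have hγ0 : γ ≠ 0 := by
    intro h0
    refine hb ⟨0, (algebraMap F L).injective ?_⟩
    rw [h0] at hγ
    simp only [map_add, map_sub, map_mul, map_pow, map_one, map_ofNat, map_zero] at hα hγ ⊢
    linear_combination -(1 + 2 * algebraMap F L n - 2 * α) * hγ + 4 * hα
  have htop : F⟮α, β, γ⟯ = ⊤ := by
    refine eq_top_iff.mpr fun z _ => ?_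
    have hz : z ∈ Algebra.adjoin F ((quartic n c).rootSet L) := by
      rw [SplittingField.adjoin_rootSet]; trivial
    refine Algebra.adjoin_le (S := F⟮α, β, γ⟯.toSubalgebra) (fun w hw => ?_) hz
    exact mem_adjoin_of_aeval_quartic_eq_zero h2 hα hβ hγ hγ0 (mem_rootSet.mp hw).2
  exact finrank_eq_eight_of_adjoin_eq_top h2 ha hb hab (by ring) hα hβ hγ htop

end Quartic

open Equiv

namespace DihedralGroup

variable {n : ℕ}

def toPerm (n : ℕ) : DihedralGroup n →* Perm (ZMod n) where
  toFun
    | r i => Equiv.addRight i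
    | sr i => (Equiv.neg _).trans (Equiv.subRight i)
  map_one' := by ext x; simp [← r_zero]
  map_mul' := by
    rintro (i | i) (j | j) <;> ext x <;>
      simp only [r_mul_r, r_mul_sr, sr_mul_r, sr_mul_sr, Perm.coe_mul, Function.comp_apply,
        coe_addRight, coe_trans, trans_apply, Equiv.neg_apply, subRight_apply] <;> ring

theorem toPerm_injective (hn : (2 : ZMod n) ≠ 0) : Function.Injective (toPerm n) := by
  rintro (i | i) (j | j) h <;>
    have h0 := congrArg (fun σ : Perm (ZMod n) => σ 0) h <;>
    have h1 := congrArg (fun σ : Perm (ZMod n) => σ 1) h <;>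
    simp only [toPerm, MonoidHom.coe_mk, OneHom.coe_mk, coe_addRight, trans_apply,
      Equiv.neg_apply, subRight_apply] at h0 h1
  · congr 1; linear_combination h0
  · exact absurd (by linear_combination h1 - h0) hn
  · exact absurd (by linear_combination h0 - h1) hn
  · congr 1; linear_combination -h0

end DihedralGroup

open DihedralGroup in
theorem nonempty_mulEquiv_dihedralGroup_four_of_injective {G α : Type*} [Group G] [Finite α]
    (hα : Nat.card α = 4) (hG : Nat.card G = 8) {f : G →* Perm α} (hf : Function.Injective f) :
    Nonempty (G ≃* DihedralGroup 4) := by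
  -- Subgroups of order 8 of `S₄` have index 3, so they are Sylow 2-subgroups.
  have : Fact (Nat.Prime 2) := ⟨Nat.prime_two⟩
  have hS : Nat.card (Perm (ZMod 4)) = 24 := by rw [Nat.card_perm, Nat.card_zmod]; rfl
  let toSylow (H : Subgroup (Perm (ZMod 4))) (hH : Nat.card H = 8) : Sylow 2 (Perm (ZMod 4)) :=
    (IsPGroup.of_card (n := 3) hH).toSylow (by
      have := H.card_mul_index; rw [hH, hS] at this
      rw [show H.index = 3 by omega]; decide)
  let e : α ≃ ZMod 4 := Finite.equivFinOfCardEq hα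
  let g : G →* Perm (ZMod 4) := e.permCongrHom.toMonoidHom.comp f
  have hg : Function.Injective g := e.permCongrHom.injective.comp hf
  let P := toSylow g.range (by rw [← Nat.card_congr (MonoidHom.ofInjective hg).toEquiv, hG])
  let ι := MonoidHom.ofInjective (toPerm_injective (n := 4) (by decide))
  let Q := toSylow (toPerm 4).range (by rw [← Nat.card_congr ι.toEquiv, nat_card])
  exact ⟨(MonoidHom.ofInjective hg).trans ((Sylow.equiv P Q).trans ι.symm)⟩

theorem Polynomial.Gal.nonempty_mulEquiv_dihedralGroup_four {F : Type*} [Field F] {p : F[X]}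
    (hp : p.Separable) (hdeg : p.natDegree = 4) (h8 : finrank F p.SplittingField = 8) :
    Nonempty (p.Gal ≃* DihedralGroup 4) := by
  have : Fact ((p.map (algebraMap F p.SplittingField)).Splits) := ⟨SplittingField.splits p⟩
  refine nonempty_mulEquiv_dihedralGroup_four_of_injective (α := p.rootSet p.SplittingField) ?_ ?_
    (Gal.galActionHom_injective p p.SplittingField)
  · rw [Nat.card_eq_fintype_card, card_rootSet_eq_natDegree hp (SplittingField.splits p), hdeg]
  · rw [Gal.card_of_separable hp, h8]

theorem Polynomial.not_isSquare_of_odd_natDegree {R : Type*} [CommRing R] [IsDomain R]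
    {p : R[X]} (h : Odd p.natDegree) : ¬IsSquare p := by
  rintro ⟨r, rfl⟩
  have hr : r ≠ 0 := by rintro rfl; simp at h
  rw [natDegree_mul hr hr, ← two_mul] at h
  exact Nat.not_odd_iff_even.mpr (even_two_mul _) h

theorem not_isSquare_of_not_isSquare_map {R S G : Type*} [Monoid R] [Monoid S] [FunLike G R S]
    [MonoidHomClass G R S] (f : G) {x : R} (h : ¬IsSquare (f x)) : ¬IsSquare x :=
  fun hx => h (hx.map f)

theorem not_isSquare_algebraMap {R L : Type*} [CommRing R] [IsDomain R] [IsIntegrallyClosed R]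
    [Field L] [Algebra R L] [IsFractionRing R L] {x : R} (hx : ¬IsSquare x) :
    ¬IsSquare (algebraMap R L x) := by
  rintro ⟨z, hz⟩
  obtain ⟨y, hy⟩ := IsIntegrallyClosed.exists_algebraMap_eq_of_isIntegral_pow (R := R) (x := z)
    two_pos (by rw [sq, ← hz]; exact isIntegral_algebraMap)
  exact hx ⟨y, IsFractionRing.injective R L (by rw [hz, map_mul, hy])⟩

theorem not_isSquare_algebraMap_of_odd_natDegree_aeval {σ k L : Type*} [Field k] [Field L]
    [Algebra (MvPolynomial σ k) L] [IsFractionRing (MvPolynomial σ k) L] {x : MvPolynomial σ k}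
    (v : σ → k[X]) (h : Odd (MvPolynomial.aeval v x).natDegree) :
    ¬IsSquare (algebraMap _ L x) :=
  not_isSquare_algebraMap <| not_isSquare_of_not_isSquare_map _ (not_isSquare_of_odd_natDegree h)

theorem n_sq_add_four_mul_c_eq :
    n ^ 2 + 4 * c = algebraMap (MvPolynomial (Fin 2) ℚ) K
      (MvPolynomial.X 0 ^ 2 + 4 * MvPolynomial.X 1) := by
  simp only [n, c, map_add, map_mul, map_pow, map_ofNat]

theorem one_add_four_mul_n_sub_sixteen_mul_c_eq :
    1 + 4 * n - 16 * c = algebraMap (MvPolynomial (Fin 2) ℚ) K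
      (1 + 4 * MvPolynomial.X 0 - 16 * MvPolynomial.X 1) := by
  simp only [n, c, map_add, map_sub, map_one, map_mul, map_ofNat]

theorem not_isSquare_n_sq_add_four_mul_c : ¬IsSquare (n ^ 2 + 4 * c) := by
  rw [n_sq_add_four_mul_c_eq]
  refine not_isSquare_algebraMap_of_odd_natDegree_aeval ![0, X] ?_
  simp

theorem not_isSquare_one_add_four_mul_n_sub_sixteen_mul_c : ¬IsSquare (1 + 4 * n - 16 * c) := by
  rw [one_add_four_mul_n_sub_sixteen_mul_c_eq]
  refine not_isSquare_algebraMap_of_odd_natDegree_aeval ![0, X] ?_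
  simp only [map_add, map_sub, map_one, map_mul, map_ofNat, MvPolynomial.aeval_X,
    Matrix.cons_val_zero, Matrix.cons_val_one, mul_zero, add_zero]
  rw [show (1 - 16 * X : ℚ[X]).natDegree = 1 by compute_degree!]
  decide

theorem not_isSquare_n_sq_add_four_mul_c_mul :
    ¬IsSquare ((n ^ 2 + 4 * c) * (1 + 4 * n - 16 * c)) := by
  rw [n_sq_add_four_mul_c_eq, one_add_four_mul_n_sub_sixteen_mul_c_eq, ← map_mul]
  refine not_isSquare_algebraMap_of_odd_natDegree_aeval ![X, 0] ?_
  simp only [map_add, map_sub, map_one, map_mul, map_pow, map_ofNat, MvPolynomial.aeval_X,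
    Matrix.cons_val_zero, Matrix.cons_val_one, mul_zero, add_zero, sub_zero]
  rw [show (X ^ 2 * (1 + 4 * X) : ℚ[X]).natDegree = 3 by compute_degree!]
  decide

/-- `P̃_{n,c,4}` is irreducible over `ℚ(n,c)` and the Galois
group of its splitting field over `ℚ(n,c)` is isomorphic to the dihedral group
`D₄` of order 8. -/
theorem stmt_15 : Irreducible P₄ ∧ Nonempty (P₄.Gal ≃* DihedralGroup 4) := by
  have ha := not_isSquare_n_sq_add_four_mul_c
  have hb := not_isSquare_one_add_four_mul_n_sub_sixteen_mul_c
  have hirr : Irreducible P₄ := irreducible_quartic ha hb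
  have h8 := finrank_splittingField_quartic ha hb not_isSquare_n_sq_add_four_mul_c_mul
  exact ⟨hirr, Gal.nonempty_mulEquiv_dihedralGroup_four hirr.separable natDegree_quartic h8⟩
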